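/- Let Σ be an (possibly infinite) alphabet and let W = {w ∈ Σ^ω : the set of letters occurring infinitely often in w is finite}. Let G be a Σ-labelled directed graph in which every vertex has an outgoing edge, and let v₀ be a vertex such that some infinite path from v₀ has label in W. Then there exists an infinite path ρ from v₀ with label in W that is positional, i.e., whenever ρ visits the same vertex at two positions, it leaves that vertex by the same edge at both positions. -/

import Mathlib

/-!
If the path never revisits a vertex it is positional already. Otherwise cut it at the first
repeated vertex, `ρ i = ρ j` with `i < j` and `ρ` injective below `j`, and run the loop
`ρ i, …, ρ (j - 1)` forever. The resulting lasso is positional, and its label takes only the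
finitely many values `lab 0, …, lab (j - 1)`.
-/

namespace InfMuller

variable {V A : Type*}

def IsPath (E : V → A → V → Prop) (ρ : ℕ → V) (lab : ℕ → A) : Prop :=
  ∀ n, E (ρ n) (lab n) (ρ (n + 1))

def IsPositional (ρ : ℕ → V) (lab : ℕ → A) : Prop :=
  ∀ i j, ρ i = ρ j → lab i = lab j ∧ ρ (i + 1) = ρ (j + 1)

lemma isPositional_of_injective {ρ : ℕ → V} (hρ : ρ.Injective) (lab : ℕ → A) :
    IsPositional ρ lab := by
  intro i j hij
  rw [hρ hij]
  exact ⟨rfl, rfl⟩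

lemma finite_setOf_frequently_of_finite_range {lab : ℕ → A} (h : (Set.range lab).Finite) :
    {a : A | ∀ N, ∃ n ≥ N, lab n = a}.Finite :=
  h.subset fun _ ha => let ⟨n, _, hn⟩ := ha 0; ⟨n, hn⟩

lemma exists_first_repeat {ρ : ℕ → V} (hρ : ¬ρ.Injective) :
    ∃ i j, i < j ∧ ρ i = ρ j ∧ Set.InjOn ρ (Set.Iio j) := by
  classical
  have hex : ∃ j, ∃ i < j, ρ i = ρ j := by
    simp only [Function.Injective, not_forall] at hρ
    obtain ⟨a, b, hab, hne⟩ := hρ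
    rcases lt_or_gt_of_ne hne with h | h
    · exact ⟨b, a, h, hab⟩
    · exact ⟨a, b, h, hab.symm⟩
  obtain ⟨i, hij, hrep⟩ := Nat.find_spec hex
  refine ⟨i, Nat.find hex, hij, hrep, fun p hp q hq hpq => ?_⟩
  by_contra hne
  rcases lt_or_gt_of_ne hne with h | h
  · exact Nat.find_min hex hq ⟨p, h, hpq⟩
  · exact Nat.find_min hex hp ⟨q, h, hpq.symm⟩

/-- The positions `0, 1, …, j - 1, i, …, j - 1, i, …` of the lasso closing at `ρ i = ρ j`. -/
def lassoIndex (i j : ℕ) : ℕ → ℕ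
  | 0 => 0
  | n + 1 => if lassoIndex i j n + 1 = j then i else lassoIndex i j n + 1

section Lasso

variable {i j : ℕ}

lemma lassoIndex_lt (hij : i < j) (n : ℕ) : lassoIndex i j n < j := by
  induction n with
  | zero => exact Nat.zero_lt_of_lt hij
  | succ n ih =>
    rw [lassoIndex]
    split_ifs <;> omega

lemma lassoIndex_succ_apply {ρ : ℕ → V} (hrep : ρ i = ρ j) (n : ℕ) :
    ρ (lassoIndex i j (n + 1)) = ρ (lassoIndex i j n + 1) := by
  rw [lassoIndex]
  split_ifs with h
  · rw [h, hrep]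
  · rfl

lemma IsPath.comp_lassoIndex {E : V → A → V → Prop} {ρ : ℕ → V} {lab : ℕ → A}
    (hp : IsPath E ρ lab) (hrep : ρ i = ρ j) :
    IsPath E (ρ ∘ lassoIndex i j) (lab ∘ lassoIndex i j) := fun n => by
  simpa only [Function.comp_apply, lassoIndex_succ_apply hrep] using hp (lassoIndex i j n)

lemma finite_range_comp_lassoIndex (lab : ℕ → A) (hij : i < j) :
    (Set.range (lab ∘ lassoIndex i j)).Finite :=
  ((Set.finite_Iio j).image lab).subset <| by
    rintro _ ⟨n, rfl⟩
    exact ⟨lassoIndex i j n, lassoIndex_lt hij n, rfl⟩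

lemma isPositional_comp_lassoIndex {ρ : ℕ → V} (lab : ℕ → A) (hij : i < j)
    (hrep : ρ i = ρ j) (hinj : Set.InjOn ρ (Set.Iio j)) :
    IsPositional (ρ ∘ lassoIndex i j) (lab ∘ lassoIndex i j) := by
  intro p q hpq
  have hidx : lassoIndex i j p = lassoIndex i j q :=
    hinj (lassoIndex_lt hij p) (lassoIndex_lt hij q) hpq
  refine ⟨congrArg lab hidx, ?_⟩
  simp only [Function.comp_apply, lassoIndex_succ_apply hrep, hidx]

end Lasso

end InfMuller

open InfMuller in
theorem infMuller_positional_path {V A : Type*}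
    (E : V → A → V → Prop) (v₀ : V)
    (h : ∃ (ρ : ℕ → V) (lab : ℕ → A), ρ 0 = v₀ ∧
          (∀ n, E (ρ n) (lab n) (ρ (n + 1))) ∧
          {a : A | ∀ N, ∃ n ≥ N, lab n = a}.Finite) :
    ∃ (ρ : ℕ → V) (lab : ℕ → A), ρ 0 = v₀ ∧
      (∀ n, E (ρ n) (lab n) (ρ (n + 1))) ∧
      {a : A | ∀ N, ∃ n ≥ N, lab n = a}.Finite ∧
      ∀ i j, ρ i = ρ j → lab i = lab j ∧ ρ (i + 1) = ρ (j + 1) := by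
  obtain ⟨ρ, lab, h0, hpath, hfin⟩ := h
  by_cases hρ : ρ.Injective
  · exact ⟨ρ, lab, h0, hpath, hfin, isPositional_of_injective hρ lab⟩
  obtain ⟨i, j, hij, hrep, hinj⟩ := exists_first_repeat hρ
  exact ⟨ρ ∘ lassoIndex i j, lab ∘ lassoIndex i j, h0,
    IsPath.comp_lassoIndex hpath hrep,
    finite_setOf_frequently_of_finite_range (finite_range_comp_lassoIndex lab hij),
    isPositional_comp_lassoIndex lab hij hrep hinj⟩
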